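/- For every z ∈ ℂ^n with f_{i,j,k}(z) ≠ 0 for all triples of distinct indices, and every i: K_i(z) v_{j,k} = (d_{j,k}/f_{i,j,k}(z)) (a_i v_{j,k} + a_j v_{k,i} + a_k v_{i,j}) whenever i ∉ {j,k}, and K_i(z) v_{j,i} = −Σ_{k ∉ {i,j}} K_i(z) v_{j,k}. -/

import Mathlib

open Finset

/-- `d_{i,j} = b_i^1 b_j^2 − b_i^2 b_j^1`. -/
def dd2 {n : ℕ} (b : Fin n → Fin 2 → ℂ) (i j : Fin n) : ℂ :=
  b i 0 * b j 1 - b i 1 * b j 0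

/-- `f_{i,j,k}(z) = d_{j,k} z_i + d_{k,i} z_j + d_{i,j} z_k`. -/
def ff2 {n : ℕ} (b : Fin n → Fin 2 → ℂ) (z : Fin n → ℂ) (i j k : Fin n) : ℂ :=
  dd2 b j k * z i + dd2 b k i * z j + dd2 b i j * z k

/-- The basis vector `F_{i,j}` of `V` in the coordinate model: an element of
`Fin n → Fin n → ℂ` whose `(i,j)` entry is `1` and `(j,i)` entry is `-1`.
This realizes the relations `F_{j,i} = -F_{i,j}` and `F_{i,i} = 0`. -/
def F2 (n : ℕ) (i j : Fin n) : Fin n → Fin n → ℂ :=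
  fun k l => (if k = i ∧ l = j then 1 else 0) - (if k = j ∧ l = i then 1 else 0)

/-- The space `V` spanned by the `F_{i,j}`: antisymmetric coefficient arrays. -/
noncomputable def skewV2 (n : ℕ) : Submodule ℂ (Fin n → Fin n → ℂ) where
  carrier := {x | ∀ i j, x j i = -x i j}
  add_mem' := by
    intro x y hx hy i j
    simp only [Pi.add_apply, hx i j, hy i j]
    ring
  zero_mem' := by
    intro i j
    simp
  smul_mem' := by
    intro c x hx i j
    simp only [Pi.smul_apply, smul_eq_mul, hx i j]
    ring

/-- The subspace `Sing V ⊆ V` of singular vectors: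
`{∑_{i<j} c_{i,j} F_{i,j} : ∑_{j<i} a_j c_{j,i} − ∑_{j>i} a_j c_{i,j} = 0 for every i}`. -/
noncomputable def singV2 (n : ℕ) (a : Fin n → ℂ) : Submodule ℂ (Fin n → Fin n → ℂ) where
  carrier := {x | (∀ i j, x j i = -x i j) ∧ ∀ i,
    (∑ j ∈ Finset.univ.filter (fun j => j < i), a j * x j i) -
      (∑ j ∈ Finset.univ.filter (fun j => i < j), a j * x i j) = 0}
  add_mem' := by
    intro x y hx hy
    refine ⟨fun i j => ?_, fun i => ?_⟩
    · simp only [Pi.add_apply, hx.1 i j, hy.1 i j]; ring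
    · have h1 := hx.2 i
      have h2 := hy.2 i
      simp only [Pi.add_apply, mul_add, Finset.sum_add_distrib]
      linear_combination h1 + h2
  zero_mem' := by
    constructor
    · intro i j; simp
    · intro i; simp
  smul_mem' := by
    intro c x hx
    refine ⟨fun i j => ?_, fun i => ?_⟩
    · simp only [Pi.smul_apply, smul_eq_mul, hx.1 i j]; ring
    · have h := hx.2 i
      simp only [Pi.smul_apply, smul_eq_mul]
      have e1 : ∑ j ∈ Finset.univ.filter (fun j => j < i), a j * (c * x j i) =
          c * ∑ j ∈ Finset.univ.filter (fun j => j < i), a j * x j i := by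
        rw [Finset.mul_sum]; exact Finset.sum_congr rfl fun j _ => by ring
      have e2 : ∑ j ∈ Finset.univ.filter (fun j => i < j), a j * (c * x i j) =
          c * ∑ j ∈ Finset.univ.filter (fun j => i < j), a j * x i j := by
        rw [Finset.mul_sum]; exact Finset.sum_congr rfl fun j _ => by ring
      rw [e1, e2]
      linear_combination c * h

/-- The vector `v_{i,j} = F_{i,j} − (a_j/|a|) ∑_k F_{i,k} − (a_i/|a|) ∑_ℓ F_{ℓ,j}`
(for `i ≠ j`), and `v_{i,i} = 0`. -/
noncomputable def vv2 {n : ℕ} (a : Fin n → ℂ) (i j : Fin n) : Fin n → Fin n → ℂ :=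
  if i = j then 0 else
    F2 n i j - (a j / ∑ m, a m) • (∑ k, F2 n i k) - (a i / ∑ m, a m) • (∑ l, F2 n l j)

/-- The contravariant form `S^{(a)}` with `S^{(a)}(F_{i,j}, F_{i,j}) = a_i a_j` for `i < j`
and distinct basis vectors orthogonal, written on coordinates. -/
noncomputable def S2 {n : ℕ} (a : Fin n → ℂ) (x y : Fin n → Fin n → ℂ) : ℂ :=
  ∑ i, ∑ j ∈ Finset.univ.filter (fun j => i < j), a i * a j * x i j * y i j

/-- The operator `L_{i,j,k}` sending each of `F_{i,j}, F_{j,k}, F_{k,i}` to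
`a_k F_{i,j} + a_i F_{j,k} + a_j F_{k,i}` and killing `F_{ℓ,m}` with `{ℓ,m} ⊄ {i,j,k}`. -/
noncomputable def L2 {n : ℕ} (a : Fin n → ℂ) (i j k : Fin n) :
    (Fin n → Fin n → ℂ) →ₗ[ℂ] (Fin n → Fin n → ℂ) where
  toFun x := (x i j + x j k + x k i) •
    (a k • F2 n i j + a i • F2 n j k + a j • F2 n k i)
  map_add' x y := by
    simp only [Pi.add_apply]
    rw [← add_smul]
    congr 1
    ring
  map_smul' c x := by
    simp only [Pi.smul_apply, smul_eq_mul, RingHom.id_apply]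
    rw [smul_smul]
    congr 1
    ring

/-- The operator `K_i(z) = ∑_{{j,k} ⊆ {1,…,n}∖{i}} (d_{j,k}/f_{i,j,k}(z)) L_{i,j,k}`,
the sum over unordered pairs `{j,k}` realized by `j < k`. -/
noncomputable def K2 {n : ℕ} (a : Fin n → ℂ) (b : Fin n → Fin 2 → ℂ) (z : Fin n → ℂ)
    (i : Fin n) : (Fin n → Fin n → ℂ) →ₗ[ℂ] (Fin n → Fin n → ℂ) :=
  ∑ j ∈ Finset.univ.erase i, ∑ k ∈ Finset.univ.filter (fun k => j < k ∧ k ≠ i),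
    (dd2 b j k / ff2 b z i j k) • L2 a i j k

/-!
Write `R_j = ∑_l F_{j,l}`, so that `v_{j,k} = F_{j,k} - (a_k/|a|) R_j + (a_j/|a|) R_k`. The operator
`L_{i,j',k'}` only sees the cyclic sum `x_{i,j'} + x_{j',k'} + x_{k',i}` of its argument, which vanishes
on every `R_m` (its coordinates are `[p = m] - [q = m]`, a coboundary). Hence for `i ∉ {j,k}` the
vector `v_{j,k}` is seen by `L_{i,j',k'}` exactly as `F_{j,k}`, so only the pair `{j',k'} = {j,k}`
contributes to `K_i(z) v_{j,k}`, and its image is `a_i v_{j,k} + a_j v_{k,i} + a_k v_{i,j}` because the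
`R`-parts of that combination cancel. The second identity is `K_i(z)` applied to `∑_k v_{j,k} = 0`,
which holds since `∑_k a_k = |a|` and `∑_m R_m = 0`.
-/

variable {n : ℕ}

lemma F2_swap (i j : Fin n) : F2 n j i = -F2 n i j := by
  funext p q
  simp only [F2, Pi.neg_apply]
  ring

def rowF2 (n : ℕ) (j : Fin n) : Fin n → Fin n → ℂ :=
  ∑ l, F2 n j l

lemma sum_F2_left (j : Fin n) : ∑ l, F2 n l j = -rowF2 n j := by
  simp only [rowF2, ← sum_neg_distrib, F2_swap j]

lemma rowF2_apply (j p q : Fin n) :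
    rowF2 n j p q = (if p = j then 1 else 0) - (if q = j then 1 else 0) := by
  simp [rowF2, Finset.sum_apply, F2, sum_sub_distrib, ite_and]

lemma sum_rowF2 : ∑ j, rowF2 n j = 0 := by
  have h : ∑ j, rowF2 n j = -∑ j, rowF2 n j := by
    calc ∑ j, rowF2 n j = ∑ l, ∑ j, F2 n j l := sum_comm
      _ = -∑ j, rowF2 n j := by simp only [sum_F2_left, sum_neg_distrib]
  exact self_eq_neg.mp h

lemma dd2_swap (b : Fin n → Fin 2 → ℂ) (i j : Fin n) : dd2 b j i = -dd2 b i j := by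
  simp only [dd2]
  ring

lemma ff2_swap (b : Fin n → Fin 2 → ℂ) (z : Fin n → ℂ) (i j k : Fin n) :
    ff2 b z i k j = -ff2 b z i j k := by
  simp only [ff2, dd2]
  ring

variable (a : Fin n → ℂ)

lemma vv2_eq (j k : Fin n) :
    vv2 a j k = F2 n j k - (a k / ∑ m, a m) • rowF2 n j + (a j / ∑ m, a m) • rowF2 n k := by
  by_cases hjk : j = k
  · subst hjk
    have hF : F2 n j j = 0 := by
      funext p q
      simp [F2]
    simp [vv2, hF]
  · rw [vv2, if_neg hjk, sum_F2_left]
    simp only [rowF2]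
    module

lemma vv2_swap (j k : Fin n) : vv2 a k j = -vv2 a j k := by
  rw [vv2_eq, vv2_eq, F2_swap]
  module

lemma sum_vv2 (hA : (∑ m, a m) ≠ 0) (j : Fin n) : ∑ k, vv2 a j k = 0 := by
  simp only [vv2_eq, sum_add_distrib, sum_sub_distrib, ← sum_smul,
    ← smul_sum, ← sum_div, div_self hA, sum_rowF2, smul_zero, one_smul]
  simp [rowF2]

lemma smul_vv2_add_cyclic (i j k : Fin n) :
    a i • vv2 a j k + a j • vv2 a k i + a k • vv2 a i j =
      a k • F2 n i j + a i • F2 n j k + a j • F2 n k i := by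
  simp only [vv2_eq]
  module

lemma L2_apply (i j k : Fin n) (x : Fin n → Fin n → ℂ) :
    L2 a i j k x = (x i j + x j k + x k i) •
      (a k • F2 n i j + a i • F2 n j k + a j • F2 n k i) := rfl

lemma L2_rowF2 (i j k m : Fin n) : L2 a i j k (rowF2 n m) = 0 := by
  have hcyc : rowF2 n m i j + rowF2 n m j k + rowF2 n m k i = 0 := by
    simp only [rowF2_apply]
    ring
  rw [L2_apply, hcyc, zero_smul]

lemma L2_vv2 {i j k : Fin n} (hij : i ≠ j) (hik : i ≠ k) (j' k' : Fin n) :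
    L2 a i j' k' (vv2 a j k) =
      ((if j' = j ∧ k' = k then (1 : ℂ) else 0) - (if j' = k ∧ k' = j then 1 else 0)) •
        (a k' • F2 n i j' + a i • F2 n j' k' + a j' • F2 n k' i) := by
  rw [vv2_eq, map_add, map_sub, map_smul, map_smul, L2_rowF2, L2_rowF2, L2_apply]
  simp [F2, hij, hik]

lemma K2_vv2_of_lt (b : Fin n → Fin 2 → ℂ) (z : Fin n → ℂ) {i j k : Fin n} (hij : i ≠ j)
    (hik : i ≠ k) (hjk : j < k) :
    K2 a b z i (vv2 a j k) = (dd2 b j k / ff2 b z i j k) •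
      (a k • F2 n i j + a i • F2 n j k + a j • F2 n k i) := by
  set g : Fin n → Fin n → Fin n → Fin n → ℂ := fun j' k' =>
    (dd2 b j' k' / ff2 b z i j' k') • (a k' • F2 n i j' + a i • F2 n j' k' + a j' • F2 n k' i)
  calc K2 a b z i (vv2 a j k)
      = ∑ j' ∈ univ.erase i, ∑ k' ∈ univ.filter (fun k' => j' < k' ∧ k' ≠ i),
          if j' = j ∧ k' = k then g j' k' else 0 := by
        simp only [K2, LinearMap.sum_apply, LinearMap.smul_apply, L2_vv2 a hij hik]
        refine sum_congr rfl fun j' _ => sum_congr rfl fun k' hk' => ?_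
        have hne : ¬(j' = k ∧ k' = j) := by
          rintro ⟨rfl, rfl⟩
          exact (mem_filter.1 hk').2.1.asymm hjk
        split_ifs <;> simp_all [g]
    _ = g j k := by
        simp [ite_and, sum_ite_eq', hij.symm, hik.symm, hjk]

lemma K2_vv2 (b : Fin n → Fin 2 → ℂ) (z : Fin n → ℂ) {i j k : Fin n} (hij : i ≠ j)
    (hik : i ≠ k) (hjk : j ≠ k) :
    K2 a b z i (vv2 a j k) = (dd2 b j k / ff2 b z i j k) •
      (a i • vv2 a j k + a j • vv2 a k i + a k • vv2 a i j) := by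
  rw [smul_vv2_add_cyclic]
  rcases hjk.lt_or_gt with hlt | hgt
  · exact K2_vv2_of_lt a b z hij hik hlt
  · rw [vv2_swap, map_neg, K2_vv2_of_lt a b z hik hij hgt, dd2_swap, ff2_swap, neg_div_neg_eq,
      F2_swap k i, F2_swap j k, F2_swap i j]
    module

lemma K2_vv2_eq_neg_sum (hA : (∑ m, a m) ≠ 0) (b : Fin n → Fin 2 → ℂ) (z : Fin n → ℂ)
    {i j : Fin n} (hij : i ≠ j) :
    K2 a b z i (vv2 a j i) =
      -∑ k ∈ univ.filter (fun k => k ≠ i ∧ k ≠ j), K2 a b z i (vv2 a j k) := by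
  have hfilter : univ.filter (fun k => k ≠ i ∧ k ≠ j) = (univ.erase j).erase i := by
    ext k
    simp [and_comm]
  have hjj : vv2 a j j = 0 := by simp [vv2]
  have hsum : ∑ k ∈ (univ.erase j).erase i, vv2 a j k = -vv2 a j i := by
    rw [sum_erase_eq_sub (mem_erase.2 ⟨hij, mem_univ i⟩), sum_erase univ hjj, sum_vv2 a hA,
      zero_sub]
  rw [← map_sum, hfilter, hsum, map_neg, neg_neg]

theorem stmt_11_general (n : ℕ) (b : Fin n → Fin 2 → ℂ)
    (a : Fin n → ℂ) (hA : (∑ j, a j) ≠ 0)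
    (z : Fin n → ℂ) :
    (∀ i j k : Fin n, i ≠ j → i ≠ k → j ≠ k →
      K2 a b z i (vv2 a j k) = (dd2 b j k / ff2 b z i j k) •
        (a i • vv2 a j k + a j • vv2 a k i + a k • vv2 a i j)) ∧
    (∀ i j : Fin n, i ≠ j →
      K2 a b z i (vv2 a j i) =
        -∑ k ∈ Finset.univ.filter (fun k => k ≠ i ∧ k ≠ j), K2 a b z i (vv2 a j k)) :=
  ⟨fun _ _ _ hij hik hjk => K2_vv2 a b z hij hik hjk,
    fun _ _ hij => K2_vv2_eq_neg_sum a hA b z hij⟩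

/-- For `z` with all `f_{i,j,k}(z) ≠ 0`:
`K_i(z) v_{j,k} = (d_{j,k}/f_{i,j,k}(z))(a_i v_{j,k} + a_j v_{k,i} + a_k v_{i,j})` for
`i ∉ {j,k}`, and `K_i(z) v_{j,i} = −∑_{k ∉ {i,j}} K_i(z) v_{j,k}`. -/
theorem stmt_11 (n : ℕ) (hn : 3 ≤ n) (b : Fin n → Fin 2 → ℂ)
    (hd : ∀ i j : Fin n, i ≠ j → dd2 b i j ≠ 0)
    (a : Fin n → ℂ) (ha : ∀ j, a j ≠ 0) (hA : (∑ j, a j) ≠ 0)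
    (z : Fin n → ℂ)
    (hz : ∀ i j k : Fin n, i ≠ j → i ≠ k → j ≠ k → ff2 b z i j k ≠ 0) :
    (∀ i j k : Fin n, i ≠ j → i ≠ k → j ≠ k →
      K2 a b z i (vv2 a j k) = (dd2 b j k / ff2 b z i j k) •
        (a i • vv2 a j k + a j • vv2 a k i + a k • vv2 a i j)) ∧
    (∀ i j : Fin n, i ≠ j →
      K2 a b z i (vv2 a j i) =
        -∑ k ∈ Finset.univ.filter (fun k => k ≠ i ∧ k ≠ j), K2 a b z i (vv2 a j k)) :=
  stmt_11_general n b a hA z
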